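/- Let F be holomorphic on an open subset of ℂⁿ with all ∂_i F nowhere vanishing, n ≥ 3. Setting L_{ij} := ln(F'_i/F'_j) (locally), the condition '∂_k L_{ij} = 0 for all pairwise distinct triples i,j,k' is equivalent to the condition 'F''_{ij}/(F'_i F'_j) takes the same value for all pairs i ≠ j'. -/

import Mathlib

/-!
Write `Q i j = F''_{ij} / (F'_i F'_j)`. Dividing `∂_k L_{ij} = 0` by `F'_k ≠ 0` turns it into
`Q k i = Q k j`, so the first condition says that each row of `Q` is constant off the diagonal.
By the symmetry of second derivatives `Q` is symmetric, and then any two off-diagonal entries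
are linked by `Q i j = Q i r = Q r i = Q r s`.
-/

/-- Complex partial derivative of `f : ℂⁿ → ℂ` in the `i`-th coordinate direction. -/
noncomputable def pd {n : ℕ} (i : Fin n) (f : (Fin n → ℂ) → ℂ) : (Fin n → ℂ) → ℂ :=
  fun x => fderiv ℂ f x (Pi.single i 1)

lemma pd_pd_eq_fderiv_fderiv {n : ℕ} {f : (Fin n → ℂ) → ℂ} {x : Fin n → ℂ}
    (hf : ContDiffAt ℂ 2 f x) (i j : Fin n) :
    pd i (pd j f) x = fderiv ℂ (fderiv ℂ f) x (Pi.single i 1) (Pi.single j 1) := by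
  have hdf : DifferentiableAt ℂ (fderiv ℂ f) x :=
    (hf.fderiv_right (by norm_num)).differentiableAt one_ne_zero
  change fderiv ℂ (fun y => fderiv ℂ f y (Pi.single j 1)) x (Pi.single i 1) = _
  simp [fderiv_clm_apply hdf (differentiableAt_const _)]

lemma pd_pd_comm {n : ℕ} {f : (Fin n → ℂ) → ℂ} {x : Fin n → ℂ}
    (hf : ContDiffAt ℂ 2 f x) (i j : Fin n) :
    pd i (pd j f) x = pd j (pd i f) x := by
  rw [pd_pd_eq_fderiv_fderiv hf, pd_pd_eq_fderiv_fderiv hf]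
  exact hf.isSymmSndFDerivAt minSmoothness_of_isRCLikeNormedField.le _ _

lemma sub_div_eq_zero_iff_div_mul_eq {K : Type*} [Field K] {c : K} (hc : c ≠ 0) (u a v b : K) :
    u / a - v / b = 0 ↔ u / (c * a) = v / (c * b) := by
  rw [sub_eq_zero, mul_comm c a, mul_comm c b, ← div_div, ← div_div, div_left_inj' hc]

lemma offDiag_const_of_comm_of_row_const {ι α : Type*} {Q : ι → ι → α}
    (hcomm : ∀ a b, Q a b = Q b a)
    (hrow : ∀ a b c, a ≠ b → b ≠ c → a ≠ c → Q a b = Q a c)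
    {i j r s : ι} (hij : i ≠ j) (hrs : r ≠ s) : Q i j = Q r s := by
  have row : ∀ {a b c}, a ≠ b → a ≠ c → Q a b = Q a c := fun {a b c} hab hac => by
    rcases eq_or_ne b c with rfl | hbc
    · rfl
    · exact hrow a b c hab hbc hac
  rcases eq_or_ne i r with rfl | hir
  · exact row hij hrs
  · calc Q i j = Q i r := row hij hir
      _ = Q r i := hcomm i r
      _ = Q r s := row hir.symm hrs

theorem stmt_16_general (n : ℕ) (U : Set (Fin n → ℂ)) (hU : IsOpen U)
    (F : (Fin n → ℂ) → ℂ) (hF : ContDiffOn ℂ ⊤ F U)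
    (hF' : ∀ x ∈ U, ∀ i, pd i F x ≠ 0) :
    (∀ x ∈ U, ∀ i j k : Fin n, i ≠ j → j ≠ k → i ≠ k →
        pd k (pd i F) x / pd i F x - pd k (pd j F) x / pd j F x = 0) ↔
      (∀ x ∈ U, ∀ i j r s : Fin n, i ≠ j → r ≠ s →
        pd i (pd j F) x / (pd i F x * pd j F x) =
          pd r (pd s F) x / (pd r F x * pd s F x)) := by
  refine ⟨fun H x hx i j r s hij hrs => ?_, fun H x hx i j k hij hjk hik => ?_⟩
  · have hF2 : ContDiffAt ℂ 2 F x :=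
      (hF.contDiffAt (hU.mem_nhds hx)).of_le (by exact_mod_cast le_top)
    refine offDiag_const_of_comm_of_row_const
      (Q := fun a b => pd a (pd b F) x / (pd a F x * pd b F x))
      (fun a b => by rw [pd_pd_comm hF2, mul_comm]) (fun a b c hab hbc hac => ?_) hij hrs
    exact (sub_div_eq_zero_iff_div_mul_eq (hF' x hx a) _ _ _ _).1
      (H x hx b c a hbc hac.symm hab.symm)
  · exact (sub_div_eq_zero_iff_div_mul_eq (hF' x hx k) _ _ _ _).2
      (H x hx k i k j hik.symm hjk.symm)

/-- For `F` holomorphic on an open `U ⊆ ℂⁿ` (`n ≥ 3`) with all `∂ᵢF` nowhere zero: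
the condition `∂_k L_{ij} = 0` for all pairwise distinct `i,j,k` — where
`L_{ij} = ln(F'_i/F'_j)`, so that `∂_k L_{ij} = F''_{ik}/F'_i − F''_{jk}/F'_j` — is
equivalent to `F''_{ij}/(F'_i F'_j)` taking the same value for all pairs `i ≠ j`. -/
theorem stmt_16 (n : ℕ) (hn : 3 ≤ n) (U : Set (Fin n → ℂ)) (hU : IsOpen U)
    (F : (Fin n → ℂ) → ℂ) (hF : ContDiffOn ℂ ⊤ F U)
    (hF' : ∀ x ∈ U, ∀ i, pd i F x ≠ 0) :
    (∀ x ∈ U, ∀ i j k : Fin n, i ≠ j → j ≠ k → i ≠ k →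
        pd k (pd i F) x / pd i F x - pd k (pd j F) x / pd j F x = 0) ↔
      (∀ x ∈ U, ∀ i j r s : Fin n, i ≠ j → r ≠ s →
        pd i (pd j F) x / (pd i F x * pd j F x) =
          pd r (pd s F) x / (pd r F x * pd s F x)) :=
  stmt_16_general n U hU F hF hF'
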